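/- arXiv:1411.4452 — 3 statements merged into one kernel-verified Lean document; each statement's English description precedes it below -/
import Mathlib

section
/- Let (R, M) be a Noetherian local ring whose associated graded ring gr_M(R) is a domain, J ⊆ R an ideal, and φ ∈ R a nonzero element. Then the initial ideal of the product ideal J·⟨φ⟩ satisfies In_M(J·⟨φ⟩) = in_M(φ) · In_M(J) in gr_M(R). -/
/-!
The element `φ` lies in `M^μ \ M^{μ+1}` (by Krull's intersection theorem its order is attained),
and the graded ring being a domain says that `in_M(φ)` is a nonzerodivisor: if `j φ ∈ M^{n+μ}`
then `j ∈ M^n`, since otherwise `j` has an exact order `k < n` and `j φ ∉ M^{k+μ+1}`.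
Hence `(J·⟨φ⟩) ∩ M^{n+μ} = φ·(J ∩ M^n)` already before adding `M^{n+μ+1}`.
-/

/-- The `M`-adic order of an element: `ord_M(h) = sup { m : h ∈ M^m }`. -/
noncomputable def mAdicOrder {R : Type*} [CommRing R] (M : Ideal R) (h : R) : ℕ :=
  sSup {m : ℕ | h ∈ M ^ m}

section Order

variable {R : Type*} [CommRing R] (M : Ideal R)

theorem mem_pow_mAdicOrder (h : R) : h ∈ M ^ mAdicOrder M h := by
  by_cases hbdd : BddAbove {m : ℕ | h ∈ M ^ m}
  · exact Nat.sSup_mem ⟨0, by simp⟩ hbdd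
  · simp [mAdicOrder, Nat.sSup_of_not_bddAbove hbdd]

theorem notMem_pow_mAdicOrder_succ {h : R} (hh : h ∉ ⨅ n : ℕ, M ^ n) :
    h ∉ M ^ (mAdicOrder M h + 1) := by
  obtain ⟨m, hm⟩ : ∃ m : ℕ, h ∉ M ^ m := by simpa [Submodule.mem_iInf] using hh
  have hbdd : BddAbove {m : ℕ | h ∈ M ^ m} :=
    ⟨m, fun k hk => not_lt.mp fun hmk => hm (Ideal.pow_le_pow_right hmk.le hk)⟩
  intro hmem
  have : mAdicOrder M h + 1 ≤ mAdicOrder M h := le_csSup hbdd hmem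
  omega

theorem exists_mem_pow_notMem_pow_succ_of_notMem_pow {j : R} {n : ℕ} (hj : j ∉ M ^ n) :
    ∃ k < n, j ∈ M ^ k ∧ j ∉ M ^ (k + 1) := by
  induction n with
  | zero => simp at hj
  | succ n ih =>
    by_cases hjn : j ∈ M ^ n
    · exact ⟨n, n.lt_succ_self, hjn, hj⟩
    · obtain ⟨k, hk, hjk⟩ := ih hjn
      exact ⟨k, hk.trans n.lt_succ_self, hjk⟩

end Order

section Cancellation

variable {R : Type*} [CommRing R] {M : Ideal R}
  (hgr : ∀ (a b : R) (m n : ℕ), a ∈ M ^ m → a ∉ M ^ (m + 1) →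
    b ∈ M ^ n → b ∉ M ^ (n + 1) → a * b ∉ M ^ (m + n + 1))
  {φ : R} {μ : ℕ} (hφ : φ ∈ M ^ μ) (hφ' : φ ∉ M ^ (μ + 1))
include hgr hφ hφ'

theorem mem_pow_of_mul_mem_pow {j : R} {n : ℕ} (hjφ : j * φ ∈ M ^ (n + μ)) : j ∈ M ^ n := by
  by_contra hj
  obtain ⟨k, hkn, hjk, hjk'⟩ := exists_mem_pow_notMem_pow_succ_of_notMem_pow M hj
  exact hgr j φ k μ hjk hjk' hφ hφ' (Ideal.pow_le_pow_right (by omega) hjφ)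

theorem mul_span_singleton_inf_pow_eq_map_mulLeft (J : Ideal R) (n : ℕ) :
    ((J * Ideal.span {φ}) ⊓ M ^ (n + μ) : Submodule R R)
      = Submodule.map (LinearMap.mulLeft R φ) ((J ⊓ M ^ n : Submodule R R)) := by
  ext x
  simp only [Submodule.mem_inf, Submodule.mem_map, LinearMap.mulLeft_apply,
    Ideal.mem_mul_span_singleton]
  constructor
  · rintro ⟨⟨j, hj, rfl⟩, hjφ⟩
    exact ⟨j, ⟨hj, mem_pow_of_mul_mem_pow hgr hφ hφ' hjφ⟩, mul_comm φ j⟩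
  · rintro ⟨j, ⟨hj, hjn⟩, rfl⟩
    refine ⟨⟨j, hj, mul_comm j φ⟩, ?_⟩
    rw [add_comm, pow_add]
    exact Ideal.mul_mem_mul hφ hjn

end Cancellation

/-- Degreewise form of `In_M(J·⟨φ⟩) = in_M(φ)·In_M(J)`: the degree-`d` part of `In_M(I)` is the
image of `I ∩ M^d` in `M^d/M^{d+1}`; `hgr` says that `gr_M(R)` is a domain. -/
theorem stmt2 {R : Type*} [CommRing R] [IsNoetherianRing R] [IsLocalRing R]
    (M : Ideal R) (hM : M = IsLocalRing.maximalIdeal R)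
    (hgr : ∀ (a b : R) (m n : ℕ), a ∈ M ^ m → a ∉ M ^ (m + 1) →
      b ∈ M ^ n → b ∉ M ^ (n + 1) → a * b ∉ M ^ (m + n + 1))
    (J : Ideal R) (φ : R) (hφ : φ ≠ 0) (μ : ℕ) (hμ : μ = mAdicOrder M φ) :
    ∀ n : ℕ,
      ((J * Ideal.span {φ}) ⊓ M ^ (n + μ) : Submodule R R) ⊔ M ^ (n + μ + 1)
        = Submodule.map (LinearMap.mulLeft R φ) ((J ⊓ M ^ n : Submodule R R))
            ⊔ M ^ (n + μ + 1) := by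
  intro n
  have hKrull : (⨅ k : ℕ, M ^ k) = ⊥ := by
    subst hM
    exact Ideal.iInf_pow_eq_bot_of_isLocalRing _ (IsLocalRing.maximalIdeal.isMaximal R).ne_top
  have hφμ : φ ∈ M ^ μ := hμ ▸ mem_pow_mAdicOrder M φ
  have hφμ' : φ ∉ M ^ (μ + 1) := hμ ▸ notMem_pow_mAdicOrder_succ M (by simpa [hKrull] using hφ)
  rw [mul_span_singleton_inf_pow_eq_map_mulLeft hgr hφμ hφμ']
end

section
/- Fix integers N ≥ 1 and e ≥ 1. Let S ⊆ ℝ_{≥0}^e be a finite nonempty set such that every s ∈ S has the form A/d for some A ∈ ℤ_{≥0}^e and some integer d with 1 ≤ d ≤ N. Then δ := inf{ v₁ + ⋯ + v_e : v ∈ conv(S) + ℝ_{≥0}^e } belongs to (1/N!)·ℤ_{≥0}. -/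
open Pointwise

/-- Superlevel sets of `f` are convex, so a minimiser of `f` on `S` also minimises it on
`conv S`; adding `C` only increases `f`. -/
theorem isLeast_image_convexHull_add {𝕜 E : Type*} [Field 𝕜] [LinearOrder 𝕜]
    [IsStrictOrderedRing 𝕜] [AddCommGroup E] [Module 𝕜 E] (f : E →ₗ[𝕜] 𝕜) {S C : Set E}
    {s₀ : E} (hs₀ : s₀ ∈ S) (hmin : ∀ s ∈ S, f s₀ ≤ f s) (hC₀ : (0 : E) ∈ C)
    (hC : ∀ c ∈ C, 0 ≤ f c) :
    IsLeast (f '' (convexHull 𝕜 S + C)) (f s₀) := by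
  refine ⟨⟨s₀ + 0, Set.add_mem_add (subset_convexHull 𝕜 S hs₀) hC₀, by simp⟩, ?_⟩
  rintro _ ⟨_, ⟨a, ha, c, hc, rfl⟩, rfl⟩
  have hfa : f s₀ ≤ f a := convexHull_min hmin (convex_halfSpace_ge f.isLinear (f s₀)) ha
  rw [map_add]
  linarith [hC c hc]

theorem exists_nat_div_factorial_eq {K : Type*} [Field K] [CharZero K] {N d : ℕ}
    (a : ℕ) (hd : 1 ≤ d) (hdN : d ≤ N) :
    ∃ m : ℕ, (a : K) / d = m / N.factorial := by
  refine ⟨a * (N.factorial / d), ?_⟩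
  have hd₀ : (d : K) ≠ 0 := by exact_mod_cast (by omega : d ≠ 0)
  have hN₀ : (N.factorial : K) ≠ 0 := by exact_mod_cast N.factorial_ne_zero
  rw [Nat.cast_mul, Nat.cast_div (Nat.dvd_factorial hd hdN) hd₀]
  field_simp

theorem stmt6_general {e N : ℕ}
    (S : Set (Fin e → ℝ)) (hS : S.Finite) (hne : S.Nonempty)
    (hform : ∀ s ∈ S, ∃ (A : Fin e → ℕ) (d : ℕ), 1 ≤ d ∧ d ≤ N ∧
      ∀ i, s i = (A i : ℝ) / (d : ℝ)) :
    ∃ m : ℕ,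
      sInf ((fun v : Fin e → ℝ => ∑ i, v i) ''
          (convexHull ℝ S + {w : Fin e → ℝ | ∀ i, 0 ≤ w i}))
        = (m : ℝ) / (N.factorial : ℝ) := by
  let σ : (Fin e → ℝ) →ₗ[ℝ] ℝ := ∑ i, LinearMap.proj i
  have hσ : ⇑σ = fun v => ∑ i, v i := by ext; simp [σ]
  obtain ⟨s₀, hs₀, hmin⟩ := S.exists_min_image σ hS hne
  have hδ := isLeast_image_convexHull_add σ (C := {w | ∀ i, 0 ≤ w i}) hs₀ hmin
    (fun _ => le_rfl)
    (fun w hw => by simpa [hσ] using Finset.sum_nonneg fun i _ => hw i)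
  obtain ⟨A, d, hd, hdN, hA⟩ := hform s₀ hs₀
  obtain ⟨m, hm⟩ := exists_nat_div_factorial_eq (K := ℝ) (∑ i, A i) hd hdN
  refine ⟨m, ?_⟩
  rw [← hσ, hδ.csInf_eq, ← hm, hσ]
  simp [hA, Finset.sum_div]

/-- Fix `N ≥ 1`, `e ≥ 1`.  If every point of the finite nonempty set `S ⊆ ℝ_{≥0}^e` has
the form `A/d` with `A ∈ ℤ_{≥0}^e` and `1 ≤ d ≤ N`, then
`δ = inf { v₁ + ⋯ + v_e : v ∈ conv(S) + ℝ_{≥0}^e }` belongs to `(1/N!)·ℤ_{≥0}`. -/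
theorem stmt6 {e N : ℕ} (he : 1 ≤ e) (hN : 1 ≤ N)
    (S : Set (Fin e → ℝ)) (hS : S.Finite) (hne : S.Nonempty)
    (hform : ∀ s ∈ S, ∃ (A : Fin e → ℕ) (d : ℕ), 1 ≤ d ∧ d ≤ N ∧
      ∀ i, s i = (A i : ℝ) / (d : ℝ)) :
    ∃ m : ℕ,
      sInf ((fun v : Fin e → ℝ => ∑ i, v i) ''
          (convexHull ℝ S + {w : Fin e → ℝ | ∀ i, 0 ≤ w i}))
        = (m : ℝ) / (N.factorial : ℝ) :=
  stmt6_general S hS hne hform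
end

section
/- Let S ⊆ ℝ_{≥0}^2 be a finite nonempty set with s₁ + s₂ ≥ 1 for every s ∈ S, and let Δ = conv(S) + ℝ_{≥0}^2. Define T(v₁, v₂) = (v₁, v₁ + v₂ - 1) and Δ' = conv(T(S)) + ℝ_{≥0}^2. Then α₁(Δ') = α₁(Δ) and β₁(Δ') = α₁(Δ) + β₁(Δ) - 1. In particular, if α₁(Δ) < 1 then β₁(Δ') < β₁(Δ). -/
/-!
Both `α₁` and `β₁` of `Δ = conv(S) + ℝ_{≥0}²` are read off the lexicographic minimum `p` of `S`:
the lexicographic upper set of `p` is convex and stable under adding `ℝ_{≥0}²`, so it contains `Δ`,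
whence `(α₁(Δ), β₁(Δ)) = p`. The shear `T` fixes the first coordinate and is increasing in the
second, so it preserves the lexicographic order and `T p` is the lexicographic minimum of `T(S)`.
-/

open Pointwise

/-- `α₁(Δ) = inf { v₁ : (v₁, v₂) ∈ Δ }`. -/
noncomputable def alpha1 (Δ : Set (ℝ × ℝ)) : ℝ := sInf (Prod.fst '' Δ)

/-- `β₁(Δ) = inf { v₂ : (α₁(Δ), v₂) ∈ Δ }`. -/
noncomputable def beta1 (Δ : Set (ℝ × ℝ)) : ℝ := sInf {y : ℝ | (alpha1 Δ, y) ∈ Δ}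

instance Prod.Lex.posSMulMono {𝕜 α β : Type*} [Semiring 𝕜] [PartialOrder 𝕜]
    [AddCommMonoid α] [LinearOrder α] [Module 𝕜 α] [PosSMulStrictMono 𝕜 α]
    [AddCommMonoid β] [PartialOrder β] [Module 𝕜 β] [PosSMulMono 𝕜 β] :
    PosSMulMono 𝕜 (α ×ₗ β) :=
  PosSMulMono.of_pos fun a ha x y hxy => by
    obtain hlt | ⟨heq, hle⟩ := Prod.Lex.le_iff.1 hxy
    · exact Prod.Lex.le_iff.2 (Or.inl (smul_lt_smul_of_pos_left hlt ha))
    · exact Prod.Lex.le_iff.2 (Or.inr ⟨by simp [heq], smul_le_smul_of_nonneg_left hle ha.le⟩)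

lemma convex_setOf_toLex_le (p : ℝ × ℝ) : Convex ℝ {v : ℝ × ℝ | toLex p ≤ toLex v} :=
  (convex_Ici (toLex p)).linear_preimage (toLexLinearEquiv ℝ (ℝ × ℝ)).toLinearMap

lemma toLex_le_of_mem_convexHull_add_orthant {S : Set (ℝ × ℝ)} {p v : ℝ × ℝ}
    (hp : ∀ s ∈ S, toLex p ≤ toLex s)
    (hv : v ∈ convexHull ℝ S + {w : ℝ × ℝ | 0 ≤ w.1 ∧ 0 ≤ w.2}) :
    toLex p ≤ toLex v := by
  obtain ⟨c, hc, w, ⟨hw₁, hw₂⟩, rfl⟩ := hv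
  have hpc : toLex p ≤ toLex c := convexHull_min hp (convex_setOf_toLex_le p) hc
  have hcw : toLex c ≤ toLex (c + w) := by
    rcases hw₁.eq_or_lt with hw₁ | hw₁
    · exact Prod.Lex.toLex_le_toLex.2 (Or.inr ⟨by simp [← hw₁], by simpa using hw₂⟩)
    · exact Prod.Lex.toLex_le_toLex.2 (Or.inl (by simpa using hw₁))
  exact hpc.trans hcw

section LexLeast

variable {Δ : Set (ℝ × ℝ)} {p : ℝ × ℝ}

lemma alpha1_eq_of_forall_toLex_le (hp : p ∈ Δ) (hmin : ∀ v ∈ Δ, toLex p ≤ toLex v) :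
    alpha1 Δ = p.1 := by
  refine IsLeast.csInf_eq ⟨⟨p, hp, rfl⟩, ?_⟩
  rintro _ ⟨v, hv, rfl⟩
  obtain hlt | ⟨heq, -⟩ := Prod.Lex.toLex_le_toLex.1 (hmin v hv)
  exacts [hlt.le, heq.le]

lemma beta1_eq_of_forall_toLex_le (hp : p ∈ Δ) (hmin : ∀ v ∈ Δ, toLex p ≤ toLex v) :
    beta1 Δ = p.2 := by
  rw [beta1, alpha1_eq_of_forall_toLex_le hp hmin]
  refine IsLeast.csInf_eq ⟨hp, fun y hy => ?_⟩
  obtain hlt | ⟨-, hle⟩ := Prod.Lex.toLex_le_toLex.1 (hmin (p.1, y) hy)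
  exacts [absurd hlt (lt_irrefl _), hle]

end LexLeast

lemma alpha1_beta1_convexHull_add_orthant {S : Set (ℝ × ℝ)} {p : ℝ × ℝ} (hpS : p ∈ S)
    (hmin : ∀ s ∈ S, toLex p ≤ toLex s) :
    alpha1 (convexHull ℝ S + {w : ℝ × ℝ | 0 ≤ w.1 ∧ 0 ≤ w.2}) = p.1 ∧
      beta1 (convexHull ℝ S + {w : ℝ × ℝ | 0 ≤ w.1 ∧ 0 ≤ w.2}) = p.2 := by
  have hp : p ∈ convexHull ℝ S + {w : ℝ × ℝ | 0 ≤ w.1 ∧ 0 ≤ w.2} :=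
    ⟨p, subset_convexHull ℝ S hpS, 0, ⟨le_rfl, le_rfl⟩, add_zero p⟩
  have hΔmin : ∀ v ∈ convexHull ℝ S + {w : ℝ × ℝ | 0 ≤ w.1 ∧ 0 ≤ w.2}, toLex p ≤ toLex v :=
    fun _ => toLex_le_of_mem_convexHull_add_orthant hmin
  exact ⟨alpha1_eq_of_forall_toLex_le hp hΔmin, beta1_eq_of_forall_toLex_le hp hΔmin⟩

lemma monotone_shear :
    Monotone fun v : ℝ ×ₗ ℝ => toLex ((ofLex v).1, (ofLex v).1 + (ofLex v).2 - 1) := by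
  intro x y hxy
  obtain hlt | ⟨heq, hle⟩ := Prod.Lex.le_iff.1 hxy
  · exact Prod.Lex.toLex_le_toLex.2 (Or.inl hlt)
  · exact Prod.Lex.toLex_le_toLex.2 (Or.inr ⟨heq, by linarith⟩)

theorem stmt9_general (S : Set (ℝ × ℝ)) (hS : S.Finite) (hne : S.Nonempty)
    (Δ Δ' : Set (ℝ × ℝ))
    (hΔ : Δ = convexHull ℝ S + {w : ℝ × ℝ | 0 ≤ w.1 ∧ 0 ≤ w.2})
    (hΔ' : Δ' = convexHull ℝ ((fun v : ℝ × ℝ => (v.1, v.1 + v.2 - 1)) '' S)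
        + {w : ℝ × ℝ | 0 ≤ w.1 ∧ 0 ≤ w.2}) :
    alpha1 Δ' = alpha1 Δ ∧
    beta1 Δ' = alpha1 Δ + beta1 Δ - 1 ∧
    (alpha1 Δ < 1 → beta1 Δ' < beta1 Δ) := by
  obtain ⟨p, hpS, hpmin⟩ := Set.exists_min_image S toLex hS hne
  obtain ⟨hα, hβ⟩ := hΔ ▸ alpha1_beta1_convexHull_add_orthant hpS hpmin
  obtain ⟨hα', hβ'⟩ := hΔ' ▸ alpha1_beta1_convexHull_add_orthant (Set.mem_image_of_mem _ hpS)
    (by rintro _ ⟨s, hs, rfl⟩; exact monotone_shear (hpmin s hs))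
  refine ⟨by rw [hα, hα'], by rw [hα, hβ, hβ'], fun hlt => ?_⟩
  rw [hα] at hlt
  linarith

/-- Let `S ⊆ ℝ_{≥0}²` be finite nonempty with `s₁ + s₂ ≥ 1` for all `s ∈ S`, and let
`Δ = conv(S) + ℝ_{≥0}²`.  With `T(v₁, v₂) = (v₁, v₁ + v₂ - 1)` and
`Δ' = conv(T(S)) + ℝ_{≥0}²`, one has `α₁(Δ') = α₁(Δ)` and
`β₁(Δ') = α₁(Δ) + β₁(Δ) - 1`; in particular, if `α₁(Δ) < 1` then `β₁(Δ') < β₁(Δ)`. -/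
theorem stmt9 (S : Set (ℝ × ℝ)) (hS : S.Finite) (hne : S.Nonempty)
    (hS0 : ∀ s ∈ S, 0 ≤ s.1 ∧ 0 ≤ s.2) (hS1 : ∀ s ∈ S, 1 ≤ s.1 + s.2)
    (Δ Δ' : Set (ℝ × ℝ))
    (hΔ : Δ = convexHull ℝ S + {w : ℝ × ℝ | 0 ≤ w.1 ∧ 0 ≤ w.2})
    (hΔ' : Δ' = convexHull ℝ ((fun v : ℝ × ℝ => (v.1, v.1 + v.2 - 1)) '' S)
        + {w : ℝ × ℝ | 0 ≤ w.1 ∧ 0 ≤ w.2}) :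
    alpha1 Δ' = alpha1 Δ ∧
    beta1 Δ' = alpha1 Δ + beta1 Δ - 1 ∧
    (alpha1 Δ < 1 → beta1 Δ' < beta1 Δ) :=
  stmt9_general S hS hne Δ Δ' hΔ hΔ'
end
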